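/- arXiv:1608.07496 — 3 statements merged into one kernel-verified Lean document; each statement's English description precedes it below -/
import Mathlib

section
/- Let G : ℝ^d → ℝ be Lebesgue integrable and let Λ ⊂ ℝ^d be a Borel set with 0 < |Λ| < ∞. For R > 0 let Λ_R := {R·x : x ∈ Λ}, so |Λ_R| = R^d·|Λ|. Then lim_{R → ∞} (1/|Λ_R|) ∫_{Λ_R} ∫_{Λ_R} G(x-y) dy dx = ∫_{ℝ^d} G(x) dx. -/
/-!
Fubini and the substitution `y = x - z` turn `∫_S ∫_S G(x - y) dy dx` into `∫ g_S(z) G(z) dz`,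
where `g_S(z) = |S ∩ (S + z)|` is the covariogram of `S`. Dilation gives
`g_{RΛ}(z) / |RΛ| = g_Λ(z / R) / |Λ|`, which lies in `[0, 1]` and tends to `1` as `R → ∞`
because translation is continuous in measure; dominated convergence then yields `∫ G`.
-/

open MeasureTheory Filter Set Topology
open scoped Pointwise ENNReal

noncomputable def covariogram {G : Type*} [MeasurableSpace G] [Sub G] (μ : Measure G)
    (s : Set G) (z : G) : ℝ :=
  μ.real (s ∩ (· - z) ⁻¹' s)

section Covariogram

variable {G : Type*} [MeasurableSpace G] [AddGroup G] {μ : Measure G} {s : Set G}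

lemma covariogram_nonneg (z : G) : 0 ≤ covariogram μ s z := measureReal_nonneg

lemma covariogram_le (hμs : μ s ≠ ∞) (z : G) : covariogram μ s z ≤ μ.real s :=
  measureReal_mono inter_subset_left hμs

lemma measurable_covariogram [MeasurableSub₂ G] [SFinite μ] (hs : MeasurableSet s) :
    Measurable (covariogram μ s) :=
  (measurable_measure_prodMk_left
    ((measurable_snd hs).inter ((measurable_snd.sub measurable_fst) hs))).ennreal_toReal

end Covariogram

theorem integral_integral_sub_eq_integral_covariogram_smul {G E : Type*} [MeasurableSpace G]
    [AddCommGroup G] [MeasurableAdd₂ G] [MeasurableNeg G] [NormedAddCommGroup E]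
    [NormedSpace ℝ E] [CompleteSpace E]
    (μ : Measure G) [SFinite μ] [μ.IsAddLeftInvariant] [μ.IsNegInvariant] {s : Set G}
    (hs : MeasurableSet s) (hμs : μ s ≠ ∞) {f : G → E} (hf : Integrable f μ) :
    ∫ x in s, ∫ y in s, f (x - y) ∂μ ∂μ = ∫ z, covariogram μ s z • f z ∂μ := by
  set T : Set (G × G) := {p | p.1 ∈ s ∧ p.1 - p.2 ∈ s}
  have hT : MeasurableSet T := (measurable_fst hs).inter ((measurable_fst.sub measurable_snd) hs)
  have hinner (x : G) :
      s.indicator (fun x => ∫ y in s, f (x - y) ∂μ) x = ∫ z, T.indicator (f ·.2) (x, z) ∂μ := by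
    by_cases hx : x ∈ s
    · rw [indicator_of_mem hx, ← integral_indicator hs,
        ← integral_sub_left_eq_self _ μ x]
      congr 1 with z
      by_cases hz : x - z ∈ s <;> simp [T, hx, hz, sub_sub_cancel]
    · simp [T, hx]
  have hint : Integrable (T.indicator (f ·.2)) (μ.prod μ) := by
    have : IsFiniteMeasure (μ.restrict s) := isFiniteMeasure_restrict.2 hμs
    rw [integrable_indicator_iff hT]
    refine IntegrableOn.mono_set ?_ (fun p hp => mk_mem_prod hp.1 (mem_univ p.2))
    rw [IntegrableOn, ← Measure.prod_restrict, Measure.restrict_univ]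
    exact hf.comp_snd _
  have hslice (z : G) :
      ∫ x, T.indicator (f ·.2) (x, z) ∂μ = covariogram μ s z • f z := by
    rw [covariogram, ← integral_indicator_const _ (hs.inter ((measurable_sub_const z) hs))]
    rfl
  calc ∫ x in s, ∫ y in s, f (x - y) ∂μ ∂μ
      = ∫ x, ∫ z, T.indicator (f ·.2) (x, z) ∂μ ∂μ := by
        rw [← integral_indicator hs]
        exact integral_congr_ae (Eventually.of_forall hinner)
    _ = ∫ z, ∫ x, T.indicator (f ·.2) (x, z) ∂μ ∂μ := integral_integral_swap hint
    _ = ∫ z, covariogram μ s z • f z ∂μ := by simp_rw [hslice]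

theorem tendsto_covariogram_nhds_zero {G : Type*} [AddGroup G] [TopologicalSpace G]
    [IsTopologicalAddGroup G] [MeasurableSpace G] [BorelSpace G] (μ : Measure G)
    [μ.IsAddRightInvariant] [μ.InnerRegularCompactLTTop] [IsLocallyFiniteMeasure μ]
    {s : Set G} (hs : MeasurableSet s) (hμs : μ s ≠ ∞) :
    Tendsto (covariogram μ s) (𝓝 0) (𝓝 (μ.real s)) := by
  let translate : C(G, C(G, G)) := ContinuousMap.curry ⟨fun p => p.2 - p.1, by fun_prop⟩
  have htranslate : Tendsto translate (𝓝 0) (𝓝 (ContinuousMap.id G)) := by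
    have h0 : translate 0 = ContinuousMap.id G := by ext; simp [translate]
    exact h0 ▸ translate.continuous.tendsto 0
  have hsymm := tendsto_measure_symmDiff_preimage_nhds_zero htranslate
      (.of_forall fun z => measurePreserving_sub_right μ z) (.id μ) hs.nullMeasurableSet hμs
  have hsdiff : Tendsto (fun z => μ (s \ (· - z) ⁻¹' s)) (𝓝 0) (𝓝 0) :=
    tendsto_of_tendsto_of_tendsto_of_le_of_le tendsto_const_nhds hsymm (fun _ => bot_le)
      (fun _ => measure_mono fun _ hx => Or.inr ⟨hx.1, hx.2⟩)
  have hcov (z : G) : covariogram μ s z = μ.real s - μ.real (s \ (· - z) ⁻¹' s) :=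
    eq_sub_of_add_eq (measureReal_inter_add_sdiff ((measurable_sub_const z) hs) hμs)
  have := (tendsto_const_nhds (x := μ.real s)).sub
    ((ENNReal.tendsto_toReal ENNReal.zero_ne_top).comp hsdiff)
  rw [ENNReal.toReal_zero, sub_zero] at this
  exact this.congr fun z => (hcov z).symm

section Dilation

variable {E F : Type*} [NormedAddCommGroup E] [NormedSpace ℝ E] [MeasurableSpace E]
  [BorelSpace E] [FiniteDimensional ℝ E] (μ : Measure E) [μ.IsAddHaarMeasure]
  [NormedAddCommGroup F] [NormedSpace ℝ F]

lemma MeasureTheory.Measure.addHaar_real_smul (r : ℝ) (s : Set E) :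
    μ.real (r • s) = |r| ^ Module.finrank ℝ E * μ.real s := by
  simp [measureReal_def, Measure.addHaar_smul, ENNReal.toReal_mul, abs_pow]

lemma covariogram_smul {r : ℝ} (hr : r ≠ 0) (s : Set E) (z : E) :
    covariogram μ (r • s) z = |r| ^ Module.finrank ℝ E * covariogram μ s (r⁻¹ • z) := by
  have hset : r • s ∩ (· - z) ⁻¹' (r • s) = r • (s ∩ (· - r⁻¹ • z) ⁻¹' s) := by
    ext x
    simp only [mem_inter_iff, mem_preimage, mem_smul_set_iff_inv_smul_mem₀ hr, smul_sub]
  rw [covariogram, hset, Measure.addHaar_real_smul, covariogram]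

theorem inv_measureReal_smul_integral_integral_sub_eq_integral_covariogram [CompleteSpace F]
    {r : ℝ} (hr : r ≠ 0) {s : Set E} (hs : MeasurableSet s) (hμs : μ s ≠ ∞) {f : E → F}
    (hf : Integrable f μ) :
    (μ.real (r • s))⁻¹ • ∫ x in r • s, ∫ y in r • s, f (x - y) ∂μ ∂μ
      = ∫ z, (covariogram μ s (r⁻¹ • z) / μ.real s) • f z ∂μ := by
  have hμrs : μ (r • s) ≠ ∞ := by
    rw [Measure.addHaar_smul]
    exact ENNReal.mul_ne_top ENNReal.ofReal_ne_top hμs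
  have hscale : |r| ^ Module.finrank ℝ E ≠ 0 := by positivity
  rw [integral_integral_sub_eq_integral_covariogram_smul μ (hs.const_smul_of_ne_zero hr) hμrs hf,
    ← integral_smul]
  congr 1 with z
  rw [covariogram_smul μ hr, Measure.addHaar_real_smul, smul_smul]
  congr 1
  field_simp

theorem tendsto_integral_covariogram_inv_smul_div_smul {s : Set E} (hs : MeasurableSet s)
    (hμs₀ : μ s ≠ 0) (hμs : μ s ≠ ∞) {f : E → F} (hf : Integrable f μ) :
    Tendsto (fun r : ℝ => ∫ z, (covariogram μ s (r⁻¹ • z) / μ.real s) • f z ∂μ) atTop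
      (𝓝 (∫ z, f z ∂μ)) := by
  have hpos : 0 < μ.real s := ENNReal.toReal_pos hμs₀ hμs
  refine tendsto_integral_filter_of_dominated_convergence (fun z => ‖f z‖)
    (.of_forall fun r => ?_) (.of_forall fun r => .of_forall fun z => ?_) hf.norm
    (.of_forall fun z => ?_)
  · exact (((measurable_covariogram hs).comp (measurable_const_smul r⁻¹)).div_const _
      ).aestronglyMeasurable.smul hf.aestronglyMeasurable
  · rw [norm_smul, Real.norm_eq_abs, abs_of_nonneg (div_nonneg (covariogram_nonneg _) hpos.le)]
    exact mul_le_of_le_one_left (norm_nonneg _) (div_le_one_of_le₀ (covariogram_le hμs _) hpos.le)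
  · have hz : Tendsto (fun r : ℝ => r⁻¹ • z) atTop (𝓝 0) := by
      simpa using (tendsto_inv_atTop_zero (𝕜 := ℝ)).smul_const z
    have := (((tendsto_covariogram_nhds_zero μ hs hμs).comp hz).div_const (μ.real s)).smul_const
      (f z)
    rwa [div_self hpos.ne', one_smul] at this

end Dilation

/-- For integrable `G` and a Borel set `Λ` with `0 < |Λ| < ∞`, the normalized double
integral `(1/|Λ_R|) ∫_{Λ_R} ∫_{Λ_R} G(x-y) dy dx` over the dilates `Λ_R = R·Λ`
converges to `∫ G` as `R → ∞`. -/
theorem normalized_variance_tendsto_integral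
    {d : ℕ} (G : EuclideanSpace ℝ (Fin d) → ℝ) (hG : Integrable G)
    (Λ : Set (EuclideanSpace ℝ (Fin d))) (hΛ : MeasurableSet Λ)
    (hΛpos : 0 < volume Λ) (hΛfin : volume Λ < ⊤) :
    Tendsto
      (fun R : ℝ =>
        (∫ x in R • Λ, ∫ y in R • Λ, G (x - y)) / (volume (R • Λ)).toReal)
      atTop (nhds (∫ x, G x)) := by
  refine (tendsto_integral_covariogram_inv_smul_div_smul volume hΛ hΛpos.ne' hΛfin.ne hG).congr' ?_
  filter_upwards [eventually_ne_atTop 0] with R hR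
  rw [← inv_measureReal_smul_integral_integral_sub_eq_integral_covariogram volume hR hΛ
    hΛfin.ne hG, smul_eq_mul, inv_mul_eq_div, measureReal_def]
end

section
/- Let d ≥ 1, let B_R ⊂ ℝ^d denote the closed Euclidean ball of radius R centered at the origin, and let ω_{d-1} denote the Lebesgue measure of the unit ball in ℝ^{d-1} (with the convention ω_0 = 1 when d = 1). Then for every x ∈ ℝ^d, lim_{R → ∞} R^{-(d-1)}·( |B_R| - |B_R ∩ (B_R + x)| ) = ω_{d-1}·|x|, where B_R + x is the translate of B_R by x and |x| is the Euclidean norm of x. -/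
/-!
Let `B = B_R` and `H = {y | ⟪x, y⟫ ≤ ‖x‖² / 2}`, the half-space of points at least as close to `0`
as to `x`. Then `B \ (B + x) ⊆ H` and `(B + x) ∩ H ⊆ B`, while `(B + x) ∩ H` is the translate by
`x` of `B ∩ {⟪x, y⟫ ≤ -‖x‖² / 2}`. Hence `|B \ (B + x)|` is exactly the volume of the slab of `B`
between the hyperplanes `⟪x, y⟫ = ±‖x‖² / 2`, of width `‖x‖`. Splitting space orthogonally along
`x`, this slab lies between the cylinders of width `‖x‖` over the `(d-1)`-balls of radii
`R - ‖x‖ / 2` and `R`, of volumes `ω_{d-1} ‖x‖ (R - ‖x‖ / 2)^{d-1}` and `ω_{d-1} ‖x‖ R^{d-1}`.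
-/

open MeasureTheory Filter Metric Set
open scoped RealInnerProductSpace Topology

theorem tendsto_div_pow_of_le_of_le {f : ℝ → ℝ} {c a : ℝ} {n : ℕ}
    (hlow : ∀ᶠ R in atTop, c * (R - a) ^ n ≤ f R) (hupp : ∀ᶠ R in atTop, f R ≤ c * R ^ n) :
    Tendsto (fun R => f R / R ^ n) atTop (𝓝 c) := by
  have hlim : Tendsto (fun R : ℝ => c * (1 - a / R) ^ n) atTop (𝓝 c) := by
    simpa using tendsto_const_nhds.mul (((tendsto_const_nhds (x := (1 : ℝ))).sub
        ((tendsto_const_nhds (x := a)).div_atTop tendsto_id)).pow n)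
  refine tendsto_of_tendsto_of_tendsto_of_le_of_le' hlim tendsto_const_nhds ?_ ?_
  · filter_upwards [hlow, eventually_gt_atTop 0] with R hR hR0
    rwa [le_div_iff₀ (by positivity), one_sub_div hR0.ne', div_pow, mul_assoc,
      div_mul_cancel₀ _ (by positivity)]
  · filter_upwards [hupp, eventually_gt_atTop 0] with R hR hR0
    rwa [div_le_iff₀ (by positivity)]

section InnerProductSpace

variable {E : Type*} [NormedAddCommGroup E] [InnerProductSpace ℝ E]

theorem norm_le_norm_sub_iff_inner_le (x y : E) : ‖y‖ ≤ ‖y - x‖ ↔ ⟪x, y⟫ ≤ ‖x‖ ^ 2 / 2 := by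
  rw [← sq_le_sq₀ (norm_nonneg _) (norm_nonneg _), norm_sub_sq_real, real_inner_comm]
  constructor <;> intro h <;> linarith

theorem measure_closedBall_sdiff_closedBall [MeasurableSpace E] [BorelSpace E] [ProperSpace E]
    (μ : Measure E) [μ.IsAddRightInvariant] [IsFiniteMeasureOnCompacts μ] (x : E) (R : ℝ) :
    μ (closedBall 0 R \ closedBall x R) =
      μ (closedBall 0 R ∩ {y | ⟪x, y⟫ ∈ Ioc (-(‖x‖ ^ 2 / 2)) (‖x‖ ^ 2 / 2)}) := by
  set h := ‖x‖ ^ 2 / 2 with h_def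
  set H : ℝ → Set E := fun a => {y | ⟪x, y⟫ ≤ a}
  have hH (a : ℝ) : MeasurableSet (H a) := measurableSet_le (by fun_prop) measurable_const
  have H_mono : H (-h) ⊆ H h := fun y (hy : ⟪x, y⟫ ≤ -h) => hy.trans (neg_le_self (by positivity))
  have translate : (· + x) ⁻¹' (closedBall x R ∩ H h) = closedBall 0 R ∩ H (-h) := by
    ext y
    simp only [H, mem_preimage, mem_inter_iff, mem_ofPred_eq, mem_closedBall_iff_norm,
      add_sub_cancel_right, sub_zero, inner_add_right, real_inner_self_eq_norm_sq, h_def]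
    constructor <;> rintro ⟨h1, h2⟩ <;> exact ⟨h1, by linarith⟩
  have near_subset : closedBall x R ∩ H h ⊆ closedBall 0 R ∩ H h := by
    rintro y ⟨hyx, hyH⟩
    rw [mem_closedBall_iff_norm] at hyx
    exact ⟨mem_closedBall_zero_iff.2 (((norm_le_norm_sub_iff_inner_le x y).2 hyH).trans hyx), hyH⟩
  have sdiff_eq :
      closedBall 0 R \ closedBall x R = (closedBall 0 R ∩ H h) \ (closedBall x R ∩ H h) := by
    ext y
    simp only [Set.mem_sdiff, mem_inter_iff, mem_closedBall_iff_norm, sub_zero, not_and]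
    refine ⟨fun ⟨hy, hyx⟩ => ⟨⟨hy, ?_⟩, fun h' => absurd h' hyx⟩,
      fun ⟨⟨hy, hyH⟩, hyx⟩ => ⟨hy, fun h' => hyx h' hyH⟩⟩
    exact (norm_le_norm_sub_iff_inner_le x y).1 (hy.trans (not_le.1 hyx).le)
  have slab_eq : closedBall 0 R ∩ {y | ⟪x, y⟫ ∈ Ioc (-h) h} =
      (closedBall 0 R ∩ H h) \ (closedBall 0 R ∩ H (-h)) := by
    ext y
    simp only [H, mem_inter_iff, Set.mem_sdiff, mem_ofPred_eq, mem_Ioc, not_and, not_le]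
    tauto
  rw [sdiff_eq, measure_sdiff near_subset (measurableSet_closedBall.inter (hH h)).nullMeasurableSet
      (measure_ne_top_of_subset (near_subset.trans inter_subset_left)
        measure_closedBall_lt_top.ne),
    ← measure_preimage_add_right μ x (closedBall x R ∩ H h), translate, slab_eq]
  exact (measure_sdiff (inter_subset_inter_right _ H_mono)
    (measurableSet_closedBall.inter (hH _)).nullMeasurableSet
    (measure_ne_top_of_subset inter_subset_left measure_closedBall_lt_top.ne)).symm

theorem norm_sq_eq_inner_sq_add_norm_sq_orthogonalProjectionOnto {u : E} (hu : ‖u‖ = 1) (y : E) :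
    ‖y‖ ^ 2 = ⟪u, y⟫ ^ 2 + ‖(ℝ ∙ u)ᗮ.orthogonalProjectionOnto y‖ ^ 2 := by
  have hP : ‖(ℝ ∙ u).orthogonalProjectionOnto y‖ = |⟪u, y⟫| := by
    rw [Submodule.coe_norm, ← Submodule.starProjection_apply,
      Submodule.starProjection_unit_singleton ℝ hu, norm_smul, hu, mul_one, Real.norm_eq_abs]
  rw [Submodule.norm_sq_eq_add_norm_sq_projection y (ℝ ∙ u), hP, sq_abs]

def slabCylinder (u : E) (a r : ℝ) : Set E :=
  {y | ⟪u, y⟫ ∈ Ioc (-a) a ∧ ‖(ℝ ∙ u)ᗮ.orthogonalProjectionOnto y‖ ≤ r}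

theorem slabCylinder_subset_closedBall_inter {u : E} (hu : ‖u‖ = 1) {a R : ℝ} (ha : 0 ≤ a)
    (haR : a ≤ R) :
    slabCylinder u a (R - a) ⊆ closedBall 0 R ∩ {y | ⟪u, y⟫ ∈ Ioc (-a) a} := by
  rintro y ⟨⟨hlo, hhi⟩, hQ⟩
  refine ⟨mem_closedBall_zero_iff.2 ?_, hlo, hhi⟩
  have hsq : ‖y‖ ^ 2 ≤ R ^ 2 := by
    rw [norm_sq_eq_inner_sq_add_norm_sq_orthogonalProjectionOnto hu]
    nlinarith [norm_nonneg ((ℝ ∙ u)ᗮ.orthogonalProjectionOnto y)]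
  exact (sq_le_sq₀ (norm_nonneg y) (ha.trans haR)).1 hsq

theorem closedBall_inter_subset_slabCylinder (u : E) (a R : ℝ) :
    closedBall 0 R ∩ {y | ⟪u, y⟫ ∈ Ioc (-a) a} ⊆ slabCylinder u a R :=
  fun y ⟨hy, hslab⟩ => ⟨hslab, (Submodule.norm_orthogonalProjectionOnto_apply_le _ y).trans
    (mem_closedBall_zero_iff.1 hy)⟩

variable [FiniteDimensional ℝ E] [MeasurableSpace E] [BorelSpace E]

theorem measurePreserving_inner_prod_orthogonalProjectionOnto {u : E} (hu : ‖u‖ = 1) :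
    MeasurePreserving (fun y : E => (⟪u, y⟫, (ℝ ∙ u)ᗮ.orthogonalProjectionOnto y)) := by
  set K := ℝ ∙ u
  set f := LinearIsometryEquiv.toSpanUnitSingleton (𝕜 := ℝ) u hu
  have hf (y : E) : f.symm (K.orthogonalProjectionOnto y) = ⟪u, y⟫ := by
    rw [LinearIsometryEquiv.symm_apply_eq, Subtype.ext_iff, ← Submodule.starProjection_apply,
      Submodule.starProjection_unit_singleton ℝ hu]
    rfl
  have hfactor : (fun y => (⟪u, y⟫, Kᗮ.orthogonalProjectionOnto y)) =
      Prod.map f.symm id ∘ WithLp.ofLp ∘ K.orthogonalDecomposition := by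
    funext y
    simp [hf]
  rw [hfactor]
  exact (f.symm.measurePreserving.prod (MeasurePreserving.id _)).comp
    ((WithLp.volume_preserving_ofLp _ _).comp K.orthogonalDecomposition.measurePreserving)

theorem volume_slabCylinder {u : E} (hu : ‖u‖ = 1) (a r : ℝ) :
    volume (slabCylinder u a r) =
      ENNReal.ofReal (2 * a) * volume (closedBall (0 : (ℝ ∙ u)ᗮ) r) := by
  calc volume (slabCylinder u a r)
      = volume ((fun y : E => (⟪u, y⟫, (ℝ ∙ u)ᗮ.orthogonalProjectionOnto y)) ⁻¹'
          Ioc (-a) a ×ˢ closedBall 0 r) := by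
        congr 1; ext y; simp [slabCylinder]
    _ = volume (Ioc (-a) a ×ˢ closedBall (0 : (ℝ ∙ u)ᗮ) r) :=
        (measurePreserving_inner_prod_orthogonalProjectionOnto hu).measure_preimage
          (measurableSet_Ioc.prod measurableSet_closedBall).nullMeasurableSet
    _ = _ := by rw [Measure.volume_eq_prod, Measure.prod_prod, Real.volume_Ioc]; ring_nf

theorem volume_closedBall_of_finrank_eq {n : ℕ} (hE : Module.finrank ℝ E = n) (x : E) {r : ℝ}
    (hr : 0 ≤ r) :
    volume (closedBall x r) =
      ENNReal.ofReal (r ^ n) * volume (closedBall (0 : EuclideanSpace ℝ (Fin n)) 1) := by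
  subst hE
  rw [Measure.addHaar_closedBall' _ _ hr,
    ← (stdOrthonormalBasis ℝ E).repr.measurePreserving.measure_preimage
      measurableSet_closedBall.nullMeasurableSet,
    LinearIsometryEquiv.preimage_closedBall, map_zero]

theorem tendsto_measureReal_closedBall_sdiff_closedBall_div_pow {n : ℕ}
    (hE : Module.finrank ℝ E = n + 1) (x : E) :
    Tendsto (fun R => volume.real (closedBall 0 R \ closedBall x R) / R ^ n) atTop
      (𝓝 (volume.real (closedBall (0 : EuclideanSpace ℝ (Fin n)) 1) * ‖x‖)) := by
  rcases eq_or_ne x 0 with rfl | hx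
  · simp
  set t := ‖x‖
  have ht : 0 < t := norm_pos_iff.2 hx
  set u := t⁻¹ • x
  have hu : ‖u‖ = 1 := norm_smul_inv_norm hx
  set ω := volume.real (closedBall (0 : EuclideanSpace ℝ (Fin n)) 1)
  have hslab (R : ℝ) : volume.real (closedBall 0 R \ closedBall x R) =
      volume.real (closedBall 0 R ∩ {y | ⟪u, y⟫ ∈ Ioc (-(t / 2)) (t / 2)}) := by
    rw [measureReal_def, measureReal_def, measure_closedBall_sdiff_closedBall]
    congr 3
    ext y
    have hxy : ⟪x, y⟫ = t * ⟪u, y⟫ := by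
      rw [real_inner_smul_left, ← mul_assoc, mul_inv_cancel₀ ht.ne', one_mul]
    simp only [mem_ofPred_eq, mem_Ioc, hxy]
    constructor <;> rintro ⟨h1, h2⟩ <;> constructor <;> nlinarith
  have hK : Module.finrank ℝ (ℝ ∙ u)ᗮ = n := by
    have := Fact.mk hE
    exact Submodule.finrank_orthogonal_span_singleton (norm_ne_zero_iff.1 (hu ▸ one_ne_zero))
  have hcyl_ne_top (r : ℝ) : volume (slabCylinder u (t / 2) r) ≠ ⊤ := by
    rw [volume_slabCylinder hu]
    exact ENNReal.mul_ne_top ENNReal.ofReal_ne_top measure_closedBall_lt_top.ne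
  have hcyl {r : ℝ} (hr : 0 ≤ r) : volume.real (slabCylinder u (t / 2) r) = ω * t * r ^ n := by
    rw [measureReal_def, volume_slabCylinder hu, volume_closedBall_of_finrank_eq hK _ hr,
      ENNReal.toReal_mul, ENNReal.toReal_mul, ENNReal.toReal_ofReal (by positivity),
      ENNReal.toReal_ofReal (by positivity), ← measureReal_def]
    ring
  refine tendsto_div_pow_of_le_of_le (a := t / 2) ?_ ?_
  · filter_upwards [eventually_ge_atTop (t / 2)] with R hR
    rw [hslab, ← hcyl (sub_nonneg.2 hR)]
    exact measureReal_mono (slabCylinder_subset_closedBall_inter hu (by positivity) hR)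
      (measure_ne_top_of_subset inter_subset_left measure_closedBall_lt_top.ne)
  · filter_upwards [eventually_ge_atTop 0] with R hR
    rw [hslab, ← hcyl hR]
    exact measureReal_mono (closedBall_inter_subset_slabCylinder u _ R) (hcyl_ne_top R)

end InnerProductSpace

/-- The boundary overlap of a ball with its translate grows like the surface order:
`R^{-(d-1)}·(|B_R| - |B_R ∩ (B_R + x)|) → ω_{d-1}·‖x‖` as `R → ∞`, where `ω_{d-1}` is
the volume of the unit ball in `ℝ^{d-1}` (so `ω_0 = 1` when `d = 1`). -/
theorem ball_translate_overlap_surface_order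
    {d : ℕ} (hd : 1 ≤ d) (x : EuclideanSpace ℝ (Fin d)) :
    Tendsto
      (fun R : ℝ =>
        ((volume (Metric.closedBall (0 : EuclideanSpace ℝ (Fin d)) R)).toReal -
            (volume (Metric.closedBall (0 : EuclideanSpace ℝ (Fin d)) R ∩
              ((fun u => u + x) ''
                Metric.closedBall (0 : EuclideanSpace ℝ (Fin d)) R))).toReal) /
          R ^ (d - 1))
      atTop
      (nhds
        ((volume (Metric.closedBall (0 : EuclideanSpace ℝ (Fin (d - 1))) 1)).toReal *
          ‖x‖)) := by
  obtain ⟨n, rfl⟩ : ∃ n, d = n + 1 := ⟨d - 1, by omega⟩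
  have hnum (R : ℝ) :
      (volume (closedBall (0 : EuclideanSpace ℝ (Fin (n + 1))) R)).toReal -
        (volume (closedBall 0 R ∩ ((fun u => u + x) '' closedBall 0 R))).toReal =
      volume.real (closedBall 0 R \ closedBall x R) := by
    have himage : (fun u => u + x) '' closedBall 0 R = closedBall x R := by simp
    rw [himage, ← measureReal_def, ← measureReal_def, ← Set.sdiff_self_inter,
      measureReal_sdiff inter_subset_left (measurableSet_closedBall.inter measurableSet_closedBall)
        measure_closedBall_lt_top.ne]
  simpa only [hnum, Nat.add_sub_cancel, measureReal_def] using
    tendsto_measureReal_closedBall_sdiff_closedBall_div_pow finrank_euclideanSpace_fin x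
end

section
/- Let (Ω, 𝒜, P) be a probability space, let ℱ ⊆ 𝒜 be a sub-σ-algebra, and let Z : Ω → ℝ be square-integrable. Suppose that for every ε > 0 there exists an ℱ-measurable square-integrable random variable W with Var(Z - W) ≤ ε. Then Z = E[Z | ℱ] almost surely; in particular Z is almost surely equal to an ℱ-measurable random variable. -/
/-!
For `ℱ`-measurable `W`, the `ℱ`-residual of `Z - W` is `Z - E[Z | ℱ]`, so the law of total
variance gives `E[(Z - E[Z | ℱ])²] ≤ Var(Z - W)`. Hence `E[(Z - E[Z | ℱ])²] = 0`.
-/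

open MeasureTheory ProbabilityTheory

namespace ProbabilityTheory

variable {Ω : Type*} {m m₀ : MeasurableSpace Ω} {μ : Measure[m₀] Ω} {X W : Ω → ℝ}

lemma sub_sub_condExp_sub_ae_eq [IsFiniteMeasure μ] (hm : m ≤ m₀) (hX : Integrable X μ)
    (hW : StronglyMeasurable[m] W) (hWi : Integrable W μ) :
    X - W - μ[X - W | m] =ᵐ[μ] X - μ[X | m] := by
  filter_upwards [condExp_sub hX hWi m] with ω hω
  rw [Pi.sub_apply, hω, Pi.sub_apply, condExp_of_stronglyMeasurable hm hW hWi]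
  simp only [Pi.sub_apply]
  ring

lemma integral_sq_sub_condExp_le_variance_sub [IsProbabilityMeasure μ] (hm : m ≤ m₀)
    (hX : MemLp X 2 μ) (hW : StronglyMeasurable[m] W) (hW2 : MemLp W 2 μ) :
    ∫ ω, (X ω - μ[X | m] ω) ^ 2 ∂μ ≤ Var[X - W; μ] := by
  have hXW := hX.sub hW2
  calc ∫ ω, (X ω - μ[X | m] ω) ^ 2 ∂μ
      = ∫ ω, ((X - W - μ[X - W | m]) ω) ^ 2 ∂μ := by
        refine integral_congr_ae ?_
        filter_upwards [sub_sub_condExp_sub_ae_eq hm (hX.integrable one_le_two) hW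
          (hW2.integrable one_le_two)] with ω hω
        rw [hω, Pi.sub_apply]
    _ = μ[Var[X - W; μ | m]] := by
        rw [condVar, integral_condExp hm]
        rfl
    _ ≤ μ[Var[X - W; μ | m]] + Var[μ[X - W | m]; μ] :=
        le_add_of_nonneg_right (variance_nonneg _ _)
    _ = Var[X - W; μ] := integral_condVar_add_variance_condExp hm hXW

lemma ae_eq_of_integral_sq_sub_eq_zero {f g : Ω → ℝ} (hf : MemLp f 2 μ) (hg : MemLp g 2 μ)
    (h : ∫ ω, (f ω - g ω) ^ 2 ∂μ = 0) : f =ᵐ[μ] g := by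
  rw [integral_eq_zero_iff_of_nonneg (f := fun ω ↦ (f ω - g ω) ^ 2) (fun ω ↦ sq_nonneg _)
    (hf.sub hg).integrable_sq] at h
  filter_upwards [h] with ω hω
  exact sub_eq_zero.mp (pow_eq_zero_iff two_ne_zero |>.mp hω)

end ProbabilityTheory

/-- The abstract rigidity principle: if `Z` is square-integrable and for every `ε > 0`
there is an `ℱ`-measurable square-integrable `W` with `Var(Z - W) ≤ ε`, then
`Z = E[Z | ℱ]` almost surely; in particular `Z` is a.s. equal to an `ℱ`-measurable
random variable. -/
theorem rigidity_of_small_variance_approximation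
    {Ω : Type*} {𝒜 : MeasurableSpace Ω} {P : Measure Ω} [IsProbabilityMeasure P]
    (ℱ : MeasurableSpace Ω) (hℱ : ℱ ≤ 𝒜)
    (Z : Ω → ℝ) (hZ : MemLp Z 2 P)
    (happrox : ∀ ε > (0 : ℝ), ∃ W : Ω → ℝ,
      Measurable[ℱ] W ∧ MemLp W 2 P ∧ variance (Z - W) P ≤ ε) :
    Z =ᵐ[P] P[Z|ℱ] := by
  have hsmall : ∀ ε > (0 : ℝ), ∫ ω, (Z ω - P[Z|ℱ] ω) ^ 2 ∂P ≤ ε := fun ε hε ↦ by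
    obtain ⟨W, hW, hW2, hvar⟩ := happrox ε hε
    exact (integral_sq_sub_condExp_le_variance_sub hℱ hZ hW.stronglyMeasurable hW2).trans hvar
  refine ae_eq_of_integral_sq_sub_eq_zero hZ (hZ.condExp one_le_two) ?_
  exact le_antisymm (le_of_forall_pos_le_add fun ε hε ↦ by simpa using hsmall ε hε)
    (integral_nonneg fun ω ↦ sq_nonneg _)
end
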